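/- arXiv:0904.3561 — 7 statements merged into one kernel-verified Lean document; each statement's English description precedes it below -/
import Mathlib

section
/- Let A be a reduced Noetherian ring with total ring of fractions Q(A) and integral closure A̅ of A in Q(A). Then A̅ is a finitely generated A-module if and only if the conductor C = {a ∈ Q(A) : a·A̅ ⊆ A} contains a non-zerodivisor on A. -/
/-!
A submodule `M` of a localization `P` of a Noetherian ring `R` at `S` is finitely generated
exactly when it is fractional, i.e. `a • M ⊆ R` for some `a ∈ S`: a common denominator of
finitely many generators does this, and conversely multiplication by the unit `a` carries `M`
isomorphically onto a submodule of the image of `R`, which is a Noetherian module.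
For `M = A̅ ⊆ Q(A)` a conductor element in `A⁰` is precisely such an `a`.
-/

open nonZeroDivisors

theorem Subalgebra.finite_iff_fg_toSubmodule {R A : Type*} [CommSemiring R] [Semiring A]
    [Algebra R A] (S : Subalgebra R A) : Module.Finite R S ↔ (Subalgebra.toSubmodule S).FG :=
  (Module.Finite.equiv_iff S.toSubmoduleEquiv).symm.trans Module.Finite.iff_fg

section Localization

variable {R P : Type*} [CommRing R] [IsNoetherianRing R] [CommRing P] [Algebra R P]
  {S : Submonoid R} [IsLocalization S P] {I : Submodule R P}

theorem IsFractional.fg (hI : IsFractional S I) : I.FG := by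
  obtain ⟨a, ha, hintegral⟩ := hI
  obtain ⟨u, hu⟩ := IsLocalization.map_units P ⟨a, ha⟩
  have hle : I.map (LinearMap.mulLeft R (u : P)) ≤ LinearMap.range (Algebra.linearMap R P) := by
    rintro _ ⟨b, hb, rfl⟩
    obtain ⟨r, hr⟩ := hintegral b hb
    exact ⟨r, by simp [hr, hu, Algebra.smul_def]⟩
  have hfg := (isNoetherian_submodule.mp inferInstance _ hle).map (LinearMap.mulLeft R (↑u⁻¹ : P))
  rwa [← Submodule.map_comp, ← LinearMap.mulLeft_mul, Units.inv_mul, LinearMap.mulLeft_one,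
    Submodule.map_id] at hfg

theorem isFractional_iff_fg : IsFractional S I ↔ I.FG :=
  ⟨IsFractional.fg, FractionalIdeal.isFractional_of_fg⟩

end Localization

theorem conductor_nonzerodivisor_iff_finite_general
    (A : Type*) [CommRing A] [IsNoetherianRing A] :
    Module.Finite A (integralClosure A (FractionRing A)) ↔
      ∃ p ∈ nonZeroDivisors A,
        ∀ b ∈ integralClosure A (FractionRing A),
          algebraMap A (FractionRing A) p * b ∈ Set.range (algebraMap A (FractionRing A)) := by
  rw [Subalgebra.finite_iff_fg_toSubmodule, ← isFractional_iff_fg (S := A⁰)]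
  simp only [IsFractional, IsLocalization.IsInteger, Algebra.smul_def]
  rfl

/-- For a reduced Noetherian ring `A`, the integral closure `A̅` of `A` in its
total ring of fractions `Q(A)` is a finitely generated `A`-module iff the conductor
`C = {a ∈ Q(A) : a·A̅ ⊆ A}` contains a non-zerodivisor on `A`. -/
theorem conductor_nonzerodivisor_iff_finite
    (A : Type*) [CommRing A] [IsReduced A] [IsNoetherianRing A] :
    Module.Finite A (integralClosure A (FractionRing A)) ↔
      ∃ p ∈ nonZeroDivisors A,
        ∀ b ∈ integralClosure A (FractionRing A),
          algebraMap A (FractionRing A) p * b ∈ Set.range (algebraMap A (FractionRing A)) :=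
  conductor_nonzerodivisor_iff_finite_general A
end

section
/- Let A be a reduced Noetherian ring, J ⊆ A an ideal containing a non-zerodivisor p on A. Then the colon ideal pJ :_A J contains p, and the A-submodule (1/p)(pJ :_A J) of Q(A) is a subring of Q(A) containing A which is integral over A and contained in the integral closure A̅ of A in Q(A). -/
/-!
An element `x` of `Q(A)` lies in `(1/p)(pJ :_A J)` exactly when `x J ⊆ J`, so this set is the
idealizer of `J` in `Q(A)`, which is visibly a subalgebra. Multiplication maps it into
`End_A(J)`, which is integral over `A` because `J` is finitely generated (Cayley–Hamilton), and
this map is injective because `J` contains `p`, a unit of `Q(A)`.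
-/

open Pointwise

namespace Submodule

variable {R B : Type*} [CommRing R] [CommRing B] [Algebra R B] (M : Submodule R B)

def idealizer : Subalgebra R B where
  carrier := M / M
  mul_mem' {x y} hx hy m hm := mul_assoc x y m ▸ hx _ (hy m hm)
  add_mem' := (M / M).add_mem
  algebraMap_mem' r m hm := by
    rw [Algebra.algebraMap_eq_smul_one, smul_mul_assoc, one_mul]
    exact M.smul_mem r hm

theorem mem_idealizer {x : B} : x ∈ M.idealizer ↔ ∀ m ∈ M, x * m ∈ M := Iff.rfl

def idealizerToEnd : M.idealizer →ₐ[R] Module.End R M where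
  toFun x := (LinearMap.mulLeft R (x : B)).restrict x.2
  map_one' := by ext; simp
  map_mul' x y := by ext m; exact mul_assoc _ _ _
  map_zero' := by ext; simp
  map_add' x y := by ext m; exact add_mul _ _ _
  commutes' r := by ext; simp [Algebra.algebraMap_eq_smul_one]

theorem idealizerToEnd_injective {m : B} (hmM : m ∈ M) (hm : m ∈ nonZeroDivisors B) :
    Function.Injective M.idealizerToEnd := by
  intro x y hxy
  have hxym : (x : B) * m = y * m := congrArg (fun f => (f ⟨m, hmM⟩ : B)) hxy
  exact Subtype.ext <| sub_eq_zero.mp <|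
    (mul_right_mem_nonZeroDivisors_eq_zero_iff hm).mp (by rw [sub_mul, hxym, sub_self])

theorem idealizer_le_integralClosure (hM : M.FG) {m : B} (hmM : m ∈ M)
    (hm : m ∈ nonZeroDivisors B) : M.idealizer ≤ integralClosure R B := fun x hx => by
  have : Module.Finite R M := Module.Finite.iff_fg.mpr hM
  have hint : IsIntegral R (⟨x, hx⟩ : M.idealizer) :=
    (isIntegral_algHom_iff (B := Module.End R M) M.idealizerToEnd
      (M.idealizerToEnd_injective hmM hm)).mp
      (Algebra.IsIntegral.isIntegral _)
  exact hint.map M.idealizer.val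

end Submodule

theorem Submodule.mem_colon_smul_self {R M : Type*} [CommSemiring R] [AddCommMonoid M]
    [Module R M] (r : R) (N : Submodule R M) : r ∈ (r • N).colon N :=
  Submodule.mem_colon.mpr fun n hn => Submodule.smul_mem_pointwise_smul n r N hn

open IsLocalization in
theorem mem_idealizer_coeSubmodule_iff {A K : Type*} [CommRing A] [CommRing K] [Algebra A K]
    [IsFractionRing A K] {J : Ideal A} {p : A} (hp : p ∈ nonZeroDivisors A) (hpJ : p ∈ J)
    {x : K} : x ∈ (coeSubmodule K J).idealizer ↔
      algebraMap A K p * x ∈ coeSubmodule K ((p • J).colon J) := by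
  set f := algebraMap A K
  have hf : Function.Injective f := IsFractionRing.injective A K
  have hfp : IsUnit (f p) := IsLocalization.map_units K ⟨p, hp⟩
  simp only [Submodule.mem_idealizer, mem_coeSubmodule, Submodule.mem_colon,
    Submodule.mem_smul_pointwise_iff_exists, smul_eq_mul]
  constructor
  · intro hx
    obtain ⟨a, haJ, ha⟩ := hx _ ⟨p, hpJ, rfl⟩
    refine ⟨a, fun j hj => ?_, by rw [ha, mul_comm]⟩
    obtain ⟨j', hj', hj'x⟩ := hx _ ⟨j, hj, rfl⟩
    refine ⟨j', hj', hf ?_⟩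
    rw [map_mul, map_mul, hj'x, ha]
    ring
  · rintro ⟨a, ha, hax⟩ _ ⟨j, hj, rfl⟩
    obtain ⟨j', hj', hj'a⟩ := ha j hj
    refine ⟨j', hj', hfp.mul_left_cancel ?_⟩
    rw [← mul_assoc, ← hax, ← map_mul, ← map_mul, hj'a]

theorem ring_structure_of_quotient_general
    (A : Type*) [CommRing A] [IsNoetherianRing A]
    (J : Ideal A) (p : A) (hp : p ∈ nonZeroDivisors A) (hpJ : p ∈ J) :
    p ∈ Submodule.colon (p • J) J ∧
    ∃ S : Subalgebra A (FractionRing A),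
      (S : Set (FractionRing A)) =
        {x : FractionRing A | algebraMap A (FractionRing A) p * x ∈
          Submodule.map (Algebra.linearMap A (FractionRing A)) (Submodule.colon (p • J) J)} ∧
      (S : Set (FractionRing A)) ⊆ (integralClosure A (FractionRing A) : Set (FractionRing A)) := by
  set J' := IsLocalization.coeSubmodule (FractionRing A) J
  have hJ'fg : J'.FG := (IsNoetherian.noetherian J).map _
  have hpJ' : algebraMap A (FractionRing A) p ∈ J' := ⟨p, hpJ, rfl⟩
  have hp' : algebraMap A (FractionRing A) p ∈ nonZeroDivisors (FractionRing A) :=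
    (IsLocalization.map_units (FractionRing A) ⟨p, hp⟩).mem_nonZeroDivisors
  refine ⟨Submodule.mem_colon_smul_self p J, J'.idealizer,
    Set.ext fun _ => mem_idealizer_coeSubmodule_iff hp hpJ,
    J'.idealizer_le_integralClosure hJ'fg hpJ' hp'⟩

/-- For a reduced Noetherian ring `A` and an ideal `J` containing a
non-zerodivisor `p`: `p ∈ pJ :_A J`, and `(1/p)(pJ :_A J) ⊆ Q(A)` is a subring of `Q(A)`
containing `A` (i.e. an `A`-subalgebra) that is contained in the integral closure of `A`
in `Q(A)`. -/
theorem ring_structure_of_quotient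
    (A : Type*) [CommRing A] [IsReduced A] [IsNoetherianRing A]
    (J : Ideal A) (p : A) (hp : p ∈ nonZeroDivisors A) (hpJ : p ∈ J) :
    p ∈ Submodule.colon (p • J) J ∧
    ∃ S : Subalgebra A (FractionRing A),
      (S : Set (FractionRing A)) =
        {x : FractionRing A | algebraMap A (FractionRing A) p * x ∈
          Submodule.map (Algebra.linearMap A (FractionRing A)) (Submodule.colon (p • J) J)} ∧
      (S : Set (FractionRing A)) ⊆ (integralClosure A (FractionRing A) : Set (FractionRing A)) :=
  ring_structure_of_quotient_general A J p hp hpJ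
end

section
/- Let ψ : A → B be a ring homomorphism between reduced Noetherian rings such that (1) ψ is injective, (2) ψ is finite (B is a finitely generated A-module via ψ), and (3) B is contained in the total ring of fractions Q(ψ(A)) of ψ(A). Then ψ induces an isomorphism of the integral closures A̅ → B̅ (where A̅ is the integral closure of A in Q(A) and B̅ of B in Q(B)). In particular, if B is integrally closed in Q(B), then A̅ ≅ B. -/
/-!
Since `A ⊆ B ⊆ Q(A)` and non-zero-divisors of `A` stay non-zero-divisors in `B`, the total ring
of fractions `Q(B)` is already a total ring of fractions of `A`, so the universal property gives
`Q(A) ≃ Q(B)` over `A`. As `B` is integral over `A`, an element of `Q(B)` is integral over `A`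
iff it is integral over `B`, so this isomorphism carries `A̅` onto `B̅`; when `B` is normal, `B`
itself is then an integral closure of `A` in `Q(B)`.
-/

open nonZeroDivisors

section Birational

variable {A B : Type*} [CommRing A] [CommRing B] [Algebra A B]

theorem algebraMap_mem_nonZeroDivisors_of_forall_mul_eq
    (hinj : Function.Injective (algebraMap A B))
    (hfrac : ∀ b : B, ∃ a s : A, algebraMap A B s ∈ B⁰ ∧ b * algebraMap A B s = algebraMap A B a)
    {s : A} (hs : s ∈ A⁰) : algebraMap A B s ∈ B⁰ := by
  refine mem_nonZeroDivisors_iff_right.mpr fun b hb ↦ ?_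
  obtain ⟨a, t, ht, hbt⟩ := hfrac b
  have ha : a = 0 := by
    refine mem_nonZeroDivisors_iff_right.mp hs a (hinj ?_)
    rw [map_mul, ← hbt, mul_right_comm, hb, zero_mul, map_zero]
  exact mem_nonZeroDivisors_iff_right.mp ht b (by rw [hbt, ha, map_zero])

theorem isFractionRing_of_forall_mul_eq (C : Type*) [CommRing C] [Algebra A C] [Algebra B C]
    [IsScalarTower A B C] [IsFractionRing B C]
    (hinj : Function.Injective (algebraMap A B))
    (hfrac : ∀ b : B, ∃ a s : A, algebraMap A B s ∈ B⁰ ∧ b * algebraMap A B s = algebraMap A B a) :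
    IsFractionRing A C := by
  have hAC : Function.Injective (algebraMap A C) := by
    rw [IsScalarTower.algebraMap_eq A B C]
    exact (IsFractionRing.injective B C).comp hinj
  refine ⟨fun s ↦ ?_, fun z ↦ ?_, fun {x y} h ↦ ⟨1, by rw [hAC h]⟩⟩
  · rw [IsScalarTower.algebraMap_apply A B C]
    exact IsLocalization.map_units C
      ⟨_, algebraMap_mem_nonZeroDivisors_of_forall_mul_eq hinj hfrac s.2⟩
  · obtain ⟨⟨b, t⟩, hz⟩ := IsLocalization.surj B⁰ z
    obtain ⟨a₁, s₁, hs₁, hb⟩ := hfrac b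
    obtain ⟨a₂, s₂, hs₂, ht⟩ := hfrac t
    have hd : algebraMap A B (a₂ * s₁) ∈ B⁰ := by
      rw [map_mul, ← ht]
      exact mul_mem (mul_mem t.2 hs₂) hs₁
    refine ⟨⟨a₁ * s₂, a₂ * s₁, mem_nonZeroDivisors_of_injective hinj hd⟩, ?_⟩
    simp only [IsScalarTower.algebraMap_apply A B C, map_mul, ← hb, ← ht, ← hz]
    ring

end Birational

theorem integralClosure_restrictScalars_eq {R A C : Type*} [CommRing R] [CommRing A] [CommRing C]
    [Algebra R A] [Algebra A C] [Algebra R C] [IsScalarTower R A C] [Algebra.IsIntegral R A] :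
    (integralClosure A C).restrictScalars R = integralClosure R C :=
  Subalgebra.ext fun x ↦ ⟨isIntegral_trans x, IsIntegral.tower_top⟩

theorem normalization_of_finite_birational_extension_general
    (A B : Type*) [CommRing A] [CommRing B]
    (ψ : A →+* B) (hinj : Function.Injective ψ) (hfin : ψ.Finite)
    (hfrac : ∀ b : B, ∃ a s : A, ψ s ∈ nonZeroDivisors B ∧ b * ψ s = ψ a) :
    ∃ f : FractionRing A →+* FractionRing B,
      (∀ a : A, f (algebraMap A (FractionRing A) a) = algebraMap B (FractionRing B) (ψ a)) ∧
      Function.Bijective f ∧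
      f '' (integralClosure A (FractionRing A)) =
        (integralClosure B (FractionRing B) : Set (FractionRing B)) ∧
      ((∀ x : FractionRing B, IsIntegral B x → x ∈ Set.range (algebraMap B (FractionRing B))) →
        Nonempty ((integralClosure A (FractionRing A)) ≃+* B)) := by
  let _ := ψ.toAlgebra
  have : Algebra.IsIntegral A B := ⟨hfin.to_isIntegral⟩
  have := isFractionRing_of_forall_mul_eq (FractionRing B) hinj hfrac
  let e := IsLocalization.algEquiv A⁰ (FractionRing A) (FractionRing B)
  refine ⟨e, fun a ↦ (e.commutes a).trans (IsScalarTower.algebraMap_apply A B _ a), e.bijective,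
    ?_, fun hnorm ↦ ?_⟩
  · simpa using congrArg SetLike.coe
      ((integralClosure_map_algEquiv e).trans (integralClosure_restrictScalars_eq (A := B)).symm)
  · have : IsIntegrallyClosed B := (isIntegrallyClosed_iff (FractionRing B)).mpr (hnorm _)
    have : IsIntegralClosure B A (FractionRing B) := .of_isIntegrallyClosedIn
    exact ⟨(e.mapIntegralClosure.trans
      (IsIntegralClosure.equiv A (integralClosure A (FractionRing B)) (FractionRing B) B)).toRingEquiv⟩

/-- An injective finite homomorphism `ψ : A → B` of reduced Noetherian rings
with `B ⊆ Q(ψ(A))` induces an isomorphism `Q(A) ≅ Q(B)` carrying the integral closure of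
`A` onto the integral closure of `B`; in particular if `B` is integrally closed then
`A̅ ≅ B`. -/
theorem normalization_of_finite_birational_extension
    (A B : Type*) [CommRing A] [CommRing B] [IsReduced A] [IsReduced B]
    [IsNoetherianRing A] [IsNoetherianRing B]
    (ψ : A →+* B) (hinj : Function.Injective ψ) (hfin : ψ.Finite)
    (hfrac : ∀ b : B, ∃ a s : A, ψ s ∈ nonZeroDivisors B ∧ b * ψ s = ψ a) :
    ∃ f : FractionRing A →+* FractionRing B,
      (∀ a : A, f (algebraMap A (FractionRing A) a) = algebraMap B (FractionRing B) (ψ a)) ∧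
      Function.Bijective f ∧
      f '' (integralClosure A (FractionRing A)) =
        (integralClosure B (FractionRing B) : Set (FractionRing B)) ∧
      ((∀ x : FractionRing B, IsIntegral B x → x ∈ Set.range (algebraMap B (FractionRing B))) →
        Nonempty ((integralClosure A (FractionRing A)) ≃+* B)) :=
  normalization_of_finite_birational_extension_general A B ψ hinj hfin hfrac
end

section
/- Let A be a reduced Noetherian ring such that A̅ is a finitely generated A-module, and let (J, p) be a test pair for A, i.e., J is a radical ideal of A containing the non-zerodivisor p with N(A) ⊆ V(J). Let A' be a finite extension ring of A inside Q(A) with inclusion ψ : A ↪ A'. Then (√(ψ(J)A'), ψ(p)) is a test pair for A': √(ψ(J)A') is a radical ideal of A' containing the non-zerodivisor ψ(p) on A', and N(A') ⊆ V(√(ψ(J)A')). -/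
/-!
Let `P` be a prime of `A'` and `Q = P ∩ A`. If `A_Q` is integrally closed, every `x ∈ A'` is
integral over `A`, so its image in `Q(A_Q)` lies in `A_Q`; clearing the denominator gives `t ∉ Q`
with `t x ∈ A`. Hence `A'_P` is already the localization `A_Q`, so it is integrally closed.
Thus every prime of `N(A')` lies over a prime of `N(A) ⊆ V(J)`, so it contains `J A'` and its
radical.
-/

open scoped nonZeroDivisors

section

variable {A : Type*} [CommRing A] (M : Submonoid A) (T : Type*) [CommRing T] [Algebra A T]
  [IsLocalization M T] {K : Type*} [CommRing K] [Algebra A K] [IsFractionRing A K]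

noncomputable abbrev fractionRingMapLocalization : K →+* FractionRing T :=
  IsLocalization.map (FractionRing T) (algebraMap A T) (IsLocalization.nonZeroDivisors_le_comap M T)

theorem exists_mem_mul_eq_zero_of_fractionRingMapLocalization_eq_zero {z : K}
    (hz : fractionRingMapLocalization M T z = 0) : ∃ u ∈ M, algebraMap A K u * z = 0 := by
  obtain ⟨⟨n, s⟩, rfl⟩ := IsLocalization.mk'_surjective A⁰ z
  rw [IsLocalization.map_mk', IsLocalization.mk'_eq_zero_iff] at hz
  obtain ⟨⟨m, hm⟩, hmn⟩ := hz
  have hn : algebraMap A T n = 0 := (mul_left_mem_nonZeroDivisors_eq_zero_iff hm).mp hmn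
  obtain ⟨⟨u, hu⟩, hun⟩ := (IsLocalization.map_eq_zero_iff M T n).mp hn
  refine ⟨u, hu, ?_⟩
  rw [← IsLocalization.mk'_one (M := A⁰) K u, ← IsLocalization.mk'_mul, one_mul, hun,
    IsLocalization.mk'_zero]

theorem exists_mem_mul_eq_algebraMap_of_isIntegral [IsIntegrallyClosed T] {x : K}
    (hx : IsIntegral A x) : ∃ t ∈ M, ∃ a : A, algebraMap A K t * x = algebraMap A K a := by
  set f := fractionRingMapLocalization (K := K) M T
  have hf : ∀ a : A, f (algebraMap A K a) = algebraMap A (FractionRing T) a := fun a => by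
    rw [IsLocalization.map_eq, ← IsScalarTower.algebraMap_apply]
  have hfx : IsIntegral T (f x) :=
    (hx.map_of_comp_eq (RingHom.id A) f (RingHom.ext fun a => (hf a).symm)).tower_top
  obtain ⟨y, hy⟩ := IsIntegrallyClosed.isIntegral_iff.mp hfx
  obtain ⟨⟨a, t⟩, hat⟩ := IsLocalization.surj M y
  have hker : f (algebraMap A K t * x - algebraMap A K a) = 0 := by
    rw [map_sub, map_mul, hf, hf, ← hy, IsScalarTower.algebraMap_apply A T (FractionRing T),
      IsScalarTower.algebraMap_apply A T (FractionRing T) a, ← map_mul, mul_comm, hat, sub_self]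
  obtain ⟨u, hu, hux⟩ := exists_mem_mul_eq_zero_of_fractionRingMapLocalization_eq_zero M T hker
  refine ⟨u * t, mul_mem hu t.2, u * a, ?_⟩
  simp only [map_mul]
  linear_combination hux

end

theorem isLocalization_atPrime_of_forall_exists_mul_eq {A B : Type*} [CommRing A] [CommRing B]
    [Algebra A B] (hinj : Function.Injective (algebraMap A B)) (P : Ideal B) [P.IsPrime]
    (hclear : ∀ x : B, ∃ t ∈ (P.comap (algebraMap A B)).primeCompl, ∃ a : A,
      algebraMap A B t * x = algebraMap A B a) :
    IsLocalization (P.comap (algebraMap A B)).primeCompl (Localization.AtPrime P) := by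
  set Q := P.comap (algebraMap A B)
  set L := Localization.AtPrime P
  have hunit : ∀ c ∈ P.primeCompl, ∃ t ∈ Q.primeCompl, ∃ b ∈ Q.primeCompl,
      algebraMap A B t * c = algebraMap A B b := by
    intro c hc
    obtain ⟨t, ht, b, hb⟩ := hclear c
    refine ⟨t, ht, b, fun hbQ => ?_, hb⟩
    change algebraMap A B b ∈ P at hbQ
    rw [← hb] at hbQ
    exact (Ideal.IsPrime.mem_or_mem ‹_› hbQ).elim ht hc
  have hL : ∀ a : A, algebraMap A L a = algebraMap B L (algebraMap A B a) :=
    IsScalarTower.algebraMap_apply A B L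
  refine ⟨fun t => ?_, fun z => ?_, fun {a b} h => ?_⟩
  · rw [hL]
    exact IsLocalization.map_units L (⟨_, t.2⟩ : P.primeCompl)
  · obtain ⟨⟨x, s⟩, hxs⟩ := IsLocalization.surj P.primeCompl z
    obtain ⟨tx, htx, ax, hax⟩ := hclear x
    obtain ⟨ts, hts, bs, hbs, hsb⟩ := hunit s s.2
    refine ⟨⟨ax * ts, ⟨tx * bs, mul_mem htx hbs⟩⟩, ?_⟩
    change z * algebraMap A L (tx * bs) = algebraMap A L (ax * ts)
    rw [hL, hL, map_mul (algebraMap A B), map_mul (algebraMap A B), ← hax, ← hsb]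
    simp only [map_mul] at hxs ⊢
    linear_combination
      (algebraMap B L (algebraMap A B tx) * algebraMap B L (algebraMap A B ts)) * hxs
  · rw [hL, hL] at h
    obtain ⟨⟨c, hc⟩, hcab⟩ := IsLocalization.exists_of_eq (M := P.primeCompl) h
    obtain ⟨tc, htc, bc, hbc, hcb⟩ := hunit c hc
    refine ⟨⟨bc, hbc⟩, hinj ?_⟩
    simp only [map_mul, ← hcb]
    linear_combination algebraMap A B tc * hcab

theorem isIntegrallyClosed_localization_atPrime_of_comap {A K : Type*} [CommRing A] [CommRing K]
    [Algebra A K] [IsFractionRing A K] (A' : Subalgebra A K) [Algebra.IsIntegral A A']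
    (P : Ideal A') [P.IsPrime]
    [IsIntegrallyClosed (Localization.AtPrime (P.comap (algebraMap A A')))] :
    IsIntegrallyClosed (Localization.AtPrime P) := by
  set Q := P.comap (algebraMap A A')
  have hinj : Function.Injective (algebraMap A A') := fun a b h =>
    IsFractionRing.injective A K (congrArg A'.val h)
  have hclear (x : A') :
      ∃ t ∈ Q.primeCompl, ∃ a : A, algebraMap A A' t * x = algebraMap A A' a := by
    obtain ⟨t, ht, a, h⟩ := exists_mem_mul_eq_algebraMap_of_isIntegral Q.primeCompl
      (Localization.AtPrime Q) ((Algebra.IsIntegral.isIntegral x).map A'.val)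
    exact ⟨t, ht, a, Subtype.val_injective (by simpa using h)⟩
  have := isLocalization_atPrime_of_forall_exists_mul_eq hinj P hclear
  exact .of_equiv (IsLocalization.algEquiv Q.primeCompl (Localization.AtPrime Q)
    (Localization.AtPrime P)).toRingEquiv

theorem test_pair_of_extension_general
    (A : Type*) [CommRing A]
    (J : Ideal A)
    (p : A) (hp : p ∈ nonZeroDivisors A) (hpJ : p ∈ J)
    (hN : ∀ (P : Ideal A) (hP : P.IsPrime),
      ¬ IsIntegrallyClosed (@Localization.AtPrime _ _ P hP) → J ≤ P)
    (A' : Subalgebra A (FractionRing A)) (hA' : Module.Finite A A') :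
    let J' : Ideal A' := (J.map (algebraMap A A')).radical
    J'.IsRadical ∧
    algebraMap A A' p ∈ J' ∧
    algebraMap A A' p ∈ nonZeroDivisors A' ∧
    (∀ (P : Ideal A') (hP : P.IsPrime),
      ¬ IsIntegrallyClosed (@Localization.AtPrime _ _ P hP) → J' ≤ P) := by
  refine ⟨Ideal.radical_isRadical _, Ideal.le_radical (Ideal.mem_map_of_mem _ hpJ), ?_, ?_⟩
  · refine comap_nonZeroDivisors_le_of_injective (f := A'.val) Subtype.val_injective ?_
    simpa using (IsLocalization.map_units (FractionRing A) (⟨p, hp⟩ : A⁰)).mem_nonZeroDivisors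
  · intro P hP hP_not
    have : Algebra.IsIntegral A A' := Algebra.IsIntegral.of_finite A A'
    have hJ : J ≤ P.comap (algebraMap A A') := hN _ (hP.comap _) fun _ =>
      hP_not (isIntegrallyClosed_localization_atPrime_of_comap A' P)
    exact (hP.radical_le_iff).mpr (Ideal.map_le_iff_le_comap.mpr hJ)

/-- If `(J, p)` is a test pair for a reduced Noetherian ring `A` with
module-finite normalization, and `A ⊆ A' ⊆ Q(A)` is a finite extension, then
`(√(ψ(J)A'), ψ(p))` is a test pair for `A'`. -/
theorem test_pair_of_extension
    (A : Type*) [CommRing A] [IsReduced A] [IsNoetherianRing A]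
    (hbar : Module.Finite A (integralClosure A (FractionRing A)))
    (J : Ideal A) (hrad : J.IsRadical)
    (p : A) (hp : p ∈ nonZeroDivisors A) (hpJ : p ∈ J)
    (hN : ∀ (P : Ideal A) (hP : P.IsPrime),
      ¬ IsIntegrallyClosed (@Localization.AtPrime _ _ P hP) → J ≤ P)
    (A' : Subalgebra A (FractionRing A)) (hA' : Module.Finite A A') :
    let J' : Ideal A' := (J.map (algebraMap A A')).radical
    J'.IsRadical ∧
    algebraMap A A' p ∈ J' ∧
    algebraMap A A' p ∈ nonZeroDivisors A' ∧
    (∀ (P : Ideal A') (hP : P.IsPrime),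
      ¬ IsIntegrallyClosed (@Localization.AtPrime _ _ P hP) → J' ≤ P) :=
  test_pair_of_extension_general A J p hp hpJ hN A' hA'
end

section
/- Let A be a reduced Noetherian ring, A ⊆ A' ⊆ Q(A) with A' finite over A. Let (J, p) be a test pair for A and set p' = p viewed in A'. Suppose d ∈ A is a non-zerodivisor and U, H are ideals of A with A' = (1/d)U and J' = (1/d)H as A-submodules of Q(A), where J' is an ideal of A' containing p'. Then (p'J') :_{A'} J' = (1/d)(dpH :_A H). -/
set_option synthInstance.maxHeartbeats 1000000
set_option maxHeartbeats 1000000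

open Pointwise

/-- Theorem `thm:jihi`: With `A ⊆ A' ⊆ Q(A)` finite, `(J,p)` a test pair for
`A`, `d ∈ A` a non-zerodivisor, `U, H ⊆ A` ideals with `A' = (1/d)U` and `J' = (1/d)H`
(`J'` an ideal of `A'` containing `p' = p`): `(p'J') :_{A'} J' = (1/d)(dpH :_A H)`. -/
theorem colon_over_original_ring
    (A : Type*) [CommRing A] [IsReduced A] [IsNoetherianRing A]
    (A' : Subalgebra A (FractionRing A)) (hA' : Module.Finite A A')
    (J : Ideal A) (hrad : J.IsRadical)
    (p : A) (hp : p ∈ nonZeroDivisors A) (hpJ : p ∈ J)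
    (hN : ∀ (P : Ideal A) (hP : P.IsPrime),
      ¬ IsIntegrallyClosed (@Localization.AtPrime _ _ P hP) → J ≤ P)
    (d : A) (hd : d ∈ nonZeroDivisors A) (U H : Ideal A)
    (hU : (A' : Set (FractionRing A)) =
      {x | ∃ u ∈ U, algebraMap A (FractionRing A) d * x = algebraMap A (FractionRing A) u})
    (J' : Ideal A') (hpJ' : algebraMap A A' p ∈ J')
    (hH : ((fun b : A' => (b : FractionRing A)) '' (J' : Set A')) =
      {x | ∃ h ∈ H, algebraMap A (FractionRing A) d * x = algebraMap A (FractionRing A) h}) :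
    ∀ a : A',
      a ∈ Submodule.colon ((algebraMap A A' p) • J') J' ↔
        ∃ c ∈ Submodule.colon ((d * p) • H) H,
          algebraMap A (FractionRing A) d * (a : FractionRing A)
            = algebraMap A (FractionRing A) c := by
  intro a
  set K := FractionRing A
  set f := algebraMap A K with hf
  have hι : Function.Injective f := IsFractionRing.injective A K
  have hdu : IsUnit (f d) := IsLocalization.map_units K ⟨d, hd⟩
  -- d * a lands in A (via U)
  have haU : (a : K) ∈ (A' : Set K) := a.2
  rw [hU] at haU
  obtain ⟨u, huU, hau⟩ := haU
  -- coercion of algebraMap A A' p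
  have hcoep : ((algebraMap A A' p : A') : K) = f p := rfl
  -- membership characterizations
  have memJ' : ∀ x : K, (∃ x' : A', x' ∈ J' ∧ (x' : K) = x) ↔
      ∃ h ∈ H, f d * x = f h := by
    intro x
    constructor
    · rintro ⟨x', hx', rfl⟩
      have : (x' : K) ∈ ((fun b : A' => (b : K)) '' (J' : Set A')) := ⟨x', hx', rfl⟩
      rw [hH] at this
      exact this
    · intro hx
      have : x ∈ ((fun b : A' => (b : K)) '' (J' : Set A')) := by rw [hH]; exact hx
      obtain ⟨x', hx', hxx⟩ := this
      exact ⟨x', hx', hxx⟩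
  have memP : ∀ m : A', m ∈ (algebraMap A A' p) • J' ↔ ∃ y ∈ J',
      (algebraMap A A' p) * y = m := by
    intro m
    rw [← SetLike.mem_coe, Submodule.coe_pointwise_smul, Set.mem_smul_set]
    simp [smul_eq_mul]
  have memH : ∀ m : A, m ∈ (d * p) • H ↔ ∃ h' ∈ H, d * p * h' = m := by
    intro m
    rw [← SetLike.mem_coe, Submodule.coe_pointwise_smul, Set.mem_smul_set]
    simp [smul_eq_mul]
  constructor
  · intro ha
    refine ⟨u, ?_, hau⟩
    rw [Submodule.mem_colon]
    intro h hh
    -- find x' ∈ J' with coercion x = h/d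
    obtain ⟨x', hx', hxx⟩ := (memJ' (f h * ↑hdu.unit⁻¹)).2
      ⟨h, hh, by rw [mul_comm (f d), mul_assoc]; simp⟩
    have hax := Submodule.mem_colon.1 ha x' hx'
    rw [memP] at hax
    obtain ⟨y, hyJ, hym⟩ := hax
    obtain ⟨h', hh', hyh⟩ := (memJ' (y : K)).1 ⟨y, hyJ, rfl⟩
    rw [memH, smul_eq_mul]
    refine ⟨h', hh', hι ?_⟩
    have key : (f p) * (y : K) = (a : K) * (x' : K) := by
      have := congrArg (fun z : A' => (z : K)) hym
      simpa [smul_eq_mul, hcoep] using this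
    have hx2 : f d * (x' : K) = f h := by
      rw [hxx, ← mul_assoc, mul_comm (f d), mul_assoc]; simp
    have : f (d * p * h') = f d * f p * f h' := by simp [map_mul]
    rw [this, map_mul]
    linear_combination (f d * f d) * key - (f d * f p) * hyh + (f d * (x' : K)) * hau
      + f u * hx2
  · rintro ⟨c, hc, hca⟩
    have hcu : c = u := hι (by rw [← hca, hau])
    subst hcu
    rw [Submodule.mem_colon]
    intro x' hx'
    obtain ⟨h, hh, hxh⟩ := (memJ' (x' : K)).1 ⟨x', hx', rfl⟩
    have hch := Submodule.mem_colon.1 hc h hh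
    rw [memH] at hch
    obtain ⟨h', hh', hhm⟩ := hch
    rw [smul_eq_mul] at hhm
    obtain ⟨y', hy', hyy⟩ := (memJ' (f h' * ↑hdu.unit⁻¹)).2
      ⟨h', hh', by rw [mul_comm (f d), mul_assoc]; simp⟩
    rw [memP]
    refine ⟨y', hy', ?_⟩
    -- show p * y' = a * x' by injectivity of coercion into K
    have hcoe : ((algebraMap A A' p * y' : A') : K) = ((a * x' : A') : K) := by
      push_cast
      show f p * (y' : K) = (a : K) * (x' : K)
      have hy2 : f d * (y' : K) = f h' := by
        rw [hyy, ← mul_assoc, mul_comm (f d), mul_assoc]; simp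
      have hhm' : f d * f p * f h' = f c * f h := by
        have := congrArg f hhm
        simpa [map_mul, mul_assoc] using this
      apply hdu.mul_left_cancel
      apply hdu.mul_left_cancel
      linear_combination (f d * f p) * hy2 + hhm' - f h * hau - (f d * (a : K)) * hxh
    exact Subtype.ext hcoe
end

section
/- Let A be a reduced Noetherian ring and p ∈ A a non-zerodivisor. Suppose J is a radical ideal of A containing p such that every non-normal prime of A contains J (N(A) ⊆ V(J)). If pJ :_A J = (p) (i.e., the only elements a ∈ A with aJ ⊆ pJ are multiples of p), then the canonical map A → Hom_A(J, J) is surjective. -/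
set_option synthInstance.maxHeartbeats 1000000
set_option maxHeartbeats 1000000

open Pointwise

/-- Let `(J, p)` be a test pair for the reduced Noetherian ring `A`.
If `pJ :_A J = (p)` then the canonical map `A → Hom_A(J, J)`, `a ↦ (a·)`, is surjective. -/
theorem canonical_map_surjective_of_colon_eq_span
    (A : Type*) [CommRing A] [IsReduced A] [IsNoetherianRing A]
    (p : A) (hp : p ∈ nonZeroDivisors A)
    (J : Ideal A) (hpJ : p ∈ J) (hrad : J.IsRadical)
    (hN : ∀ (P : Ideal A) (hP : P.IsPrime),
      ¬ IsIntegrallyClosed (@Localization.AtPrime _ _ P hP) → J ≤ P)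
    (hcol : Submodule.colon (p • J) J = Ideal.span {p}) :
    Function.Surjective (fun a : A => a • (LinearMap.id : J →ₗ[A] J)) := by
  intro φ
  set a : A := (φ ⟨p, hpJ⟩ : A) with ha_def
  have key : ∀ x (hx : x ∈ J), a * x = p * (φ ⟨x, hx⟩ : A) := by
    intro x hx
    have h1 : x • (⟨p, hpJ⟩ : J) = p • (⟨x, hx⟩ : J) := by
      ext; simp [mul_comm]
    calc a * x = x * a := mul_comm _ _
      _ = ((x • φ ⟨p, hpJ⟩ : J) : A) := rfl
      _ = ((φ (x • ⟨p, hpJ⟩) : J) : A) := by rw [map_smul]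
      _ = ((φ (p • ⟨x, hx⟩) : J) : A) := by rw [h1]
      _ = ((p • φ ⟨x, hx⟩ : J) : A) := by rw [map_smul]
      _ = p * (φ ⟨x, hx⟩ : A) := rfl
  have ha : a ∈ Submodule.colon (p • J) J := by
    rw [Submodule.mem_colon]
    intro x hx
    rw [smul_eq_mul, key x hx]
    exact Submodule.smul_mem_pointwise_smul _ _ _ (φ ⟨x, hx⟩).2
  rw [hcol, Ideal.mem_span_singleton'] at ha
  obtain ⟨b, hb⟩ := ha
  refine ⟨b, ?_⟩
  ext x
  have hx := x.2
  have h2 : p * (φ x : A) = a * x := (key x x.2).symm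
  have h3 : a * x = p * (b * x) := by rw [← hb]; ring
  have h4 : (φ x : A) = b * x := by
    have := h2.trans h3
    exact mul_cancel_left_mem_nonZeroDivisors hp |>.mp this.symm |>.symm
  simp only [LinearMap.smul_apply, LinearMap.id_apply]
  rw [SetLike.val_smul, smul_eq_mul, h4]
end

section
/- Let R be a Noetherian ring, I a radical ideal, and p ∈ R. If I₁ := I :_R ⟨p⟩ strictly contains I, then setting I₂ := I :_R I₁ one has I = I₁ ∩ I₂, giving a splitting of the ring: R/I embeds into R/I₁ ⊕ R/I₂ and their integral closures satisfy (R/I)‾ ≅ (R/I₁)‾ ⊕ (R/I₂)‾. -/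
set_option synthInstance.maxHeartbeats 1000000
set_option maxHeartbeats 1000000

set_option synthInstance.maxHeartbeats 2000000
set_option maxHeartbeats 2000000

section helpers
variable {R : Type*} [CommRing R]

lemma exists_mem_sInf_not_mem (B : Set (Ideal R)) (hfin : B.Finite)
    (P : Ideal R) (hP : P.IsPrime) (hB : ∀ Q ∈ B, ¬ Q ≤ P) :
    ∃ y, y ∈ sInf B ∧ y ∉ P := by
  revert hB
  refine Set.Finite.induction_on B hfin ?_ ?_
  · exact fun _ => ⟨1, by simp, fun h => hP.ne_top ((Ideal.eq_top_iff_one P).mpr h)⟩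
  · intro Q B hQB hBfin ih hB
    obtain ⟨y, hy, hyP⟩ := ih (fun Q' hQ' => hB Q' (Set.mem_insert_of_mem _ hQ'))
    obtain ⟨c, hcQ, hcP⟩ := SetLike.not_le_iff_exists.mp (hB Q (Set.mem_insert _ _))
    refine ⟨c * y, ?_, fun hmem => ((hP.mul_mem_iff_mem_or_mem.mp hmem).elim hcP hyP)⟩
    rw [sInf_insert]
    exact Submodule.mem_inf.mpr ⟨Ideal.mul_mem_right _ _ hcQ, Ideal.mul_mem_left _ _ hy⟩

lemma exists_mem_sInf_avoid (B C : Set (Ideal R)) (hBfin : B.Finite) (hCfin : C.Finite)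
    (hBprime : ∀ P ∈ B, P.IsPrime)
    (h : ∀ P ∈ B, ∀ Q ∈ C, ¬ Q ≤ P) :
    ∃ u, u ∈ sInf C ∧ ∀ P ∈ B, u ∉ P := by
  by_contra hcon
  push_neg at hcon
  have hsub : ((sInf C : Ideal R) : Set R) ⊆ ⋃ P ∈ (hBfin.toFinset : Set (Ideal R)), (P : Set R) := by
    intro u hu
    obtain ⟨P, hP, huP⟩ := hcon u hu
    exact Set.mem_biUnion (by simpa using hP) huP
  classical
  rcases hBfin.toFinset.eq_empty_or_nonempty with he | ⟨P₀, hP₀⟩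
  · rw [he] at hsub
    simpa using hsub (Submodule.zero_mem _) |>.elim
  · have := (Ideal.subset_union_prime (f := fun P : Ideal R => P) P₀ P₀
      (fun P hP _ _ => hBprime P (by simpa using hP))).mp hsub
    obtain ⟨P, hP, hle⟩ := this
    have hPB : P ∈ B := by simpa using hP
    obtain ⟨y, hy, hyP⟩ := exists_mem_sInf_not_mem C hCfin P (hBprime P hPB) (h P hPB)
    exact hyP (hle hy)

lemma nzd_iff (B : Set (Ideal R)) (hfin : B.Finite)
    (hprime : ∀ P ∈ B, P.IsPrime)
    (hincomp : ∀ P ∈ B, ∀ Q ∈ B, P ≤ Q → P = Q) (x : R) :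
    Ideal.Quotient.mk (sInf B) x ∈ nonZeroDivisors (R ⧸ sInf B) ↔ ∀ P ∈ B, x ∉ P := by
  constructor
  · intro hx
    by_contra hcon
    push_neg at hcon
    obtain ⟨P₀, hP₀, hxP₀⟩ := hcon
    obtain ⟨y, hy, hyP₀⟩ := exists_mem_sInf_not_mem (B \ {P₀}) (hfin.subset Set.diff_subset)
      P₀ (hprime P₀ hP₀)
      (fun Q hQ hq2 => hQ.2 (hincomp Q hQ.1 P₀ hP₀ hq2))
    have hxy : Ideal.Quotient.mk (sInf B) y * Ideal.Quotient.mk (sInf B) x = 0 := by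
      rw [← map_mul, Ideal.Quotient.eq_zero_iff_mem, Submodule.mem_sInf]
      intro P hP
      by_cases hPP : P = P₀
      · subst hPP; exact Ideal.mul_mem_left _ _ hxP₀
      · exact Ideal.mul_mem_right _ _ (Submodule.mem_sInf.mp hy P ⟨hP, hPP⟩)
    have := mem_nonZeroDivisors_iff_right.mp hx _ hxy
    rw [Ideal.Quotient.eq_zero_iff_mem, Submodule.mem_sInf] at this
    exact hyP₀ (this P₀ hP₀)
  · intro hx
    rw [mem_nonZeroDivisors_iff_right]
    intro z hz
    obtain ⟨y, rfl⟩ := Ideal.Quotient.mk_surjective z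
    rw [← map_mul, Ideal.Quotient.eq_zero_iff_mem, Submodule.mem_sInf] at hz
    rw [Ideal.Quotient.eq_zero_iff_mem, Submodule.mem_sInf]
    intro P hP
    exact ((hprime P hP).mul_mem_iff_mem_or_mem.mp (hz P hP)).resolve_right (hx P hP)
end helpers

section ic
variable {K A B : Type*} [CommRing K] [CommRing A] [CommRing B] [Algebra K A] [Algebra K B]

lemma isIntegral_prod_iff (x : A × B) :
    IsIntegral K x ↔ IsIntegral K x.1 ∧ IsIntegral K x.2 := by
  constructor
  · exact fun hx => ⟨hx.map (AlgHom.fst K A B), hx.map (AlgHom.snd K A B)⟩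
  · rintro ⟨⟨f, hf, hfx⟩, ⟨g, hg, hgx⟩⟩
    have h1 : IsIntegral K ((x.1, 0) : A × B) := by
      refine ⟨Polynomial.X * f, (Polynomial.monic_X).mul hf, ?_⟩
      rw [← Polynomial.aeval_def] at hfx ⊢
      have : (Polynomial.aeval ((x.1, 0) : A × B)) (Polynomial.X * f) =
          ((Polynomial.aeval x.1) (Polynomial.X * f), (Polynomial.aeval (0 : B)) (Polynomial.X * f)) := by
        ext
        · exact (Polynomial.aeval_algHom_apply (AlgHom.fst K A B) _ _).symm
        · exact (Polynomial.aeval_algHom_apply (AlgHom.snd K A B) _ _).symm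
      rw [this, Prod.mk_eq_zero]
      exact ⟨by rw [map_mul, Polynomial.aeval_X, hfx, mul_zero],
        by rw [map_mul, Polynomial.aeval_X, zero_mul]⟩
    have h2 : IsIntegral K ((0, x.2) : A × B) := by
      refine ⟨Polynomial.X * g, (Polynomial.monic_X).mul hg, ?_⟩
      rw [← Polynomial.aeval_def] at hgx ⊢
      have : (Polynomial.aeval ((0, x.2) : A × B)) (Polynomial.X * g) =
          ((Polynomial.aeval (0 : A)) (Polynomial.X * g), (Polynomial.aeval x.2) (Polynomial.X * g)) := by
        ext
        · exact (Polynomial.aeval_algHom_apply (AlgHom.fst K A B) _ _).symm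
        · exact (Polynomial.aeval_algHom_apply (AlgHom.snd K A B) _ _).symm
      rw [this, Prod.mk_eq_zero]
      exact ⟨by rw [map_mul, Polynomial.aeval_X, zero_mul],
        by rw [map_mul, Polynomial.aeval_X, hgx, mul_zero]⟩
    simpa using h1.add h2

noncomputable def icProdEquiv :
    integralClosure K (A × B) ≃+* integralClosure K A × integralClosure K B where
  toFun z := (⟨z.1.1, ((isIntegral_prod_iff z.1).mp z.2).1⟩,
              ⟨z.1.2, ((isIntegral_prod_iff z.1).mp z.2).2⟩)
  invFun w := ⟨(w.1.1, w.2.1), (isIntegral_prod_iff _).mpr ⟨w.1.2, w.2.2⟩⟩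
  left_inv _ := rfl
  right_inv _ := rfl
  map_mul' _ _ := rfl
  map_add' _ _ := rfl

noncomputable def icCongr {A' : Type*} [CommRing A'] [Algebra K A'] (e : A ≃ₐ[K] A') :
    integralClosure K A ≃+* integralClosure K A' where
  toFun z := ⟨e z.1, z.2.map e.toAlgHom⟩
  invFun z := ⟨e.symm z.1, z.2.map e.symm.toAlgHom⟩
  left_inv z := Subtype.ext (e.symm_apply_apply z.1)
  right_inv z := Subtype.ext (e.apply_symm_apply z.1)
  map_mul' z w := Subtype.ext (map_mul e _ _)
  map_add' z w := Subtype.ext (map_add e _ _)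

noncomputable def icBaseChange {K' : Type*} [CommRing K'] [Algebra K' A]
    (h : ∀ x : A, IsIntegral K x ↔ IsIntegral K' x) :
    integralClosure K A ≃+* integralClosure K' A where
  toFun z := ⟨z.1, (h z.1).mp z.2⟩
  invFun z := ⟨z.1, (h z.1).mpr z.2⟩
  left_inv _ := rfl
  right_inv _ := rfl
  map_mul' _ _ := rfl
  map_add' _ _ := rfl
end ic

section transfer

lemma isIntegralElem_comp_iff {S T F : Type*} [CommRing S] [CommRing T] [CommRing F]
    (π : S →+* T) (g : T →+* F) (hπ : Function.Surjective π) (x : F) :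
    (g.comp π).IsIntegralElem x ↔ g.IsIntegralElem x := by
  constructor
  · rintro ⟨q, hq, hqx⟩
    exact ⟨q.map π, hq.map π, by rwa [Polynomial.eval₂_map]⟩
  · rintro ⟨q, hq, hqx⟩
    rcases subsingleton_or_nontrivial T with hT | hT
    · have hqX : q = Polynomial.X := Subsingleton.elim _ _
      rw [hqX, Polynomial.eval₂_X] at hqx
      exact ⟨Polynomial.X, Polynomial.monic_X, by rwa [Polynomial.eval₂_X]⟩
    · have hlift : q ∈ Polynomial.lifts π := by
        rw [Polynomial.lifts_iff_coeff_lifts]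
        exact fun n => hπ (q.coeff n)
      obtain ⟨p, hp, _, hpm⟩ := Polynomial.lifts_and_degree_eq_and_monic hlift hq
      exact ⟨p, hpm, by rw [← Polynomial.eval₂_map, hp]; exact hqx⟩

end transfer

section core
variable {R : Type*} [CommRing R]

theorem split_core (B₁ B₂ : Set (Ideal R))
    (hfin₁ : B₁.Finite) (hfin₂ : B₂.Finite)
    (hprime : ∀ P ∈ B₁ ∪ B₂, P.IsPrime)
    (hincomp : ∀ P ∈ B₁ ∪ B₂, ∀ Q ∈ B₁ ∪ B₂, P ≤ Q → P = Q)
    (hdisj : ∀ P ∈ B₁, P ∉ B₂) :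
    Nonempty ((integralClosure (R ⧸ sInf (B₁ ∪ B₂)) (FractionRing (R ⧸ sInf (B₁ ∪ B₂)))) ≃+*
      (integralClosure (R ⧸ sInf B₁) (FractionRing (R ⧸ sInf B₁)) ×
       integralClosure (R ⧸ sInf B₂) (FractionRing (R ⧸ sInf B₂)))) := by
  classical
  have hfin : (B₁ ∪ B₂).Finite := hfin₁.union hfin₂
  have hp₁ : ∀ P ∈ B₁, P.IsPrime := fun P hP => hprime P (Or.inl hP)
  have hp₂ : ∀ P ∈ B₂, P.IsPrime := fun P hP => hprime P (Or.inr hP)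
  have hic₁ : ∀ P ∈ B₁, ∀ Q ∈ B₁, P ≤ Q → P = Q :=
    fun P hP Q hQ => hincomp P (Or.inl hP) Q (Or.inl hQ)
  have hic₂ : ∀ P ∈ B₂, ∀ Q ∈ B₂, P ≤ Q → P = Q :=
    fun P hP Q hQ => hincomp P (Or.inr hP) Q (Or.inr hQ)
  have h21 : ∀ P ∈ B₁, ∀ Q ∈ B₂, ¬ Q ≤ P := fun P hP Q hQ hle =>
    hdisj P hP ((hincomp Q (Or.inr hQ) P (Or.inl hP) hle) ▸ hQ)
  have h12 : ∀ P ∈ B₂, ∀ Q ∈ B₁, ¬ Q ≤ P := fun P hP Q hQ hle =>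
    hdisj Q hQ ((hincomp Q (Or.inl hQ) P (Or.inr hP) hle).symm ▸ hP)
  set I : Ideal R := sInf (B₁ ∪ B₂) with hIdef
  have hle₁ : I ≤ sInf B₁ := sInf_le_sInf Set.subset_union_left
  have hle₂ : I ≤ sInf B₂ := sInf_le_sInf Set.subset_union_right
  let π₁ : R ⧸ I →+* R ⧸ sInf B₁ := Ideal.Quotient.factor hle₁
  let π₂ : R ⧸ I →+* R ⧸ sInf B₂ := Ideal.Quotient.factor hle₂
  let F₁ := FractionRing (R ⧸ sInf B₁)
  let F₂ := FractionRing (R ⧸ sInf B₂)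
  let f₁ : R ⧸ I →+* F₁ := (algebraMap (R ⧸ sInf B₁) F₁).comp π₁
  let f₂ : R ⧸ I →+* F₂ := (algebraMap (R ⧸ sInf B₂) F₂).comp π₂
  letI a₁ : Algebra (R ⧸ I) F₁ := f₁.toAlgebra
  letI a₂ : Algebra (R ⧸ I) F₂ := f₂.toAlgebra
  have halg₁ : ∀ x : R, algebraMap (R ⧸ I) F₁ (Ideal.Quotient.mk I x)
      = algebraMap (R ⧸ sInf B₁) F₁ (Ideal.Quotient.mk (sInf B₁) x) := fun x => by
    show f₁ _ = _
    simp only [f₁, RingHom.comp_apply, π₁, Ideal.Quotient.factor_mk]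
  have halg₂ : ∀ x : R, algebraMap (R ⧸ I) F₂ (Ideal.Quotient.mk I x)
      = algebraMap (R ⧸ sInf B₂) F₂ (Ideal.Quotient.mk (sInf B₂) x) := fun x => by
    show f₂ _ = _
    simp only [f₂, RingHom.comp_apply, π₂, Ideal.Quotient.factor_mk]
  -- the product as a localization of R ⧸ I at its nonzerodivisors
  haveI isloc : IsLocalization (nonZeroDivisors (R ⧸ I)) (F₁ × F₂) := by
    constructor
    constructor
    · -- map_units'
      rintro ⟨s, hs⟩
      obtain ⟨t, rfl⟩ := Ideal.Quotient.mk_surjective s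
      have hts : ∀ P ∈ B₁ ∪ B₂, t ∉ P := (nzd_iff _ hfin hprime hincomp t).mp hs
      rw [Prod.algebraMap_apply]
      have hu1 : IsUnit (algebraMap (R ⧸ I) F₁ (Ideal.Quotient.mk I t)) := by
        rw [halg₁]
        exact IsLocalization.map_units (M := nonZeroDivisors (R ⧸ sInf B₁)) F₁
          ⟨_, (nzd_iff B₁ hfin₁ hp₁ hic₁ t).mpr (fun P hP => hts P (Or.inl hP))⟩
      have hu2 : IsUnit (algebraMap (R ⧸ I) F₂ (Ideal.Quotient.mk I t)) := by
        rw [halg₂]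
        exact IsLocalization.map_units (M := nonZeroDivisors (R ⧸ sInf B₂)) F₂
          ⟨_, (nzd_iff B₂ hfin₂ hp₂ hic₂ t).mpr (fun P hP => hts P (Or.inr hP))⟩
      obtain ⟨c1, hc1⟩ := hu1.exists_right_inv
      obtain ⟨c2, hc2⟩ := hu2.exists_right_inv
      exact isUnit_iff_exists_inv.mpr ⟨(c1, c2), Prod.ext hc1 hc2⟩
    · -- surj'
      intro z
      -- data for the first component
      obtain ⟨⟨n₁, d₁⟩, hz₁⟩ := IsLocalization.surj (nonZeroDivisors (R ⧸ sInf B₁)) z.1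
      obtain ⟨⟨n₂, d₂⟩, hz₂⟩ := IsLocalization.surj (nonZeroDivisors (R ⧸ sInf B₂)) z.2
      obtain ⟨A₁, hA₁⟩ := Ideal.Quotient.mk_surjective n₁
      obtain ⟨A₂, hA₂⟩ := Ideal.Quotient.mk_surjective n₂
      obtain ⟨t₁, ht₁⟩ := Ideal.Quotient.mk_surjective (d₁ : R ⧸ sInf B₁)
      obtain ⟨t₂, ht₂⟩ := Ideal.Quotient.mk_surjective (d₂ : R ⧸ sInf B₂)
      have ht₁' : ∀ P ∈ B₁, t₁ ∉ P :=
        (nzd_iff B₁ hfin₁ hp₁ hic₁ t₁).mp (by rw [ht₁]; exact d₁.2)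
      have ht₂' : ∀ P ∈ B₂, t₂ ∉ P :=
        (nzd_iff B₂ hfin₂ hp₂ hic₂ t₂).mp (by rw [ht₂]; exact d₂.2)
      obtain ⟨u₁, hu₁mem, hu₁⟩ := exists_mem_sInf_avoid B₁ B₂ hfin₁ hfin₂ hp₁ h21
      obtain ⟨u₂, hu₂mem, hu₂⟩ := exists_mem_sInf_avoid B₂ B₁ hfin₂ hfin₁ hp₂ h12
      obtain ⟨e₁, he₁mem, he₁⟩ := exists_mem_sInf_avoid B₂ B₁ hfin₂ hfin₁ hp₂ h12
      obtain ⟨e₂, he₂mem, he₂⟩ := exists_mem_sInf_avoid B₁ B₂ hfin₁ hfin₂ hp₁ h21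
      set s₁ : R := t₁ * u₁ + e₁ with hs₁def
      set s₂ : R := t₂ * u₂ + e₂ with hs₂def
      have hs₁ : ∀ P ∈ B₁ ∪ B₂, s₁ ∉ P := by
        rintro P (hP | hP) hmem
        · have htu : t₁ * u₁ ∉ P := fun hh =>
            ((hp₁ P hP).mul_mem_iff_mem_or_mem.mp hh).elim (ht₁' P hP) (hu₁ P hP)
          have heP : e₁ ∈ P := Submodule.mem_sInf.mp he₁mem P hP
          have hdiff : t₁ * u₁ = s₁ - e₁ := by rw [hs₁def]; ring
          exact htu (hdiff ▸ P.sub_mem hmem heP)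
        · have htu : t₁ * u₁ ∈ P := Ideal.mul_mem_left _ _ (Submodule.mem_sInf.mp hu₁mem P hP)
          have hdiff : e₁ = s₁ - t₁ * u₁ := by rw [hs₁def]; ring
          exact he₁ P hP (hdiff ▸ P.sub_mem hmem htu)
      have hs₂ : ∀ P ∈ B₁ ∪ B₂, s₂ ∉ P := by
        rintro P (hP | hP) hmem
        · have htu : t₂ * u₂ ∈ P := Ideal.mul_mem_left _ _ (Submodule.mem_sInf.mp hu₂mem P hP)
          have hdiff : e₂ = s₂ - t₂ * u₂ := by rw [hs₂def]; ring
          exact he₂ P hP (hdiff ▸ P.sub_mem hmem htu)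
        · have htu : t₂ * u₂ ∉ P := fun hh =>
            ((hp₂ P hP).mul_mem_iff_mem_or_mem.mp hh).elim (ht₂' P hP) (hu₂ P hP)
          have heP : e₂ ∈ P := Submodule.mem_sInf.mp he₂mem P hP
          have hdiff : t₂ * u₂ = s₂ - e₂ := by rw [hs₂def]; ring
          exact htu (hdiff ▸ P.sub_mem hmem heP)
      have hsS : Ideal.Quotient.mk I (s₁ * s₂) ∈ nonZeroDivisors (R ⧸ I) :=
        (nzd_iff _ hfin hprime hincomp _).mpr (fun P hP hmem =>
          ((hprime P hP).mul_mem_iff_mem_or_mem.mp hmem).elim (hs₁ P hP) (hs₂ P hP))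
      set X : R := A₁ * u₁ * s₂ + A₂ * u₂ * s₁ with hXdef
      refine ⟨⟨Ideal.Quotient.mk I X, ⟨Ideal.Quotient.mk I (s₁ * s₂), hsS⟩⟩, ?_⟩
      have comp₁ : z.1 * algebraMap (R ⧸ I) F₁ (Ideal.Quotient.mk I (s₁ * s₂))
          = algebraMap (R ⧸ I) F₁ (Ideal.Quotient.mk I X) := by
        rw [halg₁, halg₁]
        have hX₁ : Ideal.Quotient.mk (sInf B₁) X
            = Ideal.Quotient.mk (sInf B₁) (A₁ * (u₁ * s₂)) := by
          rw [Ideal.Quotient.eq]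
          have : X - A₁ * (u₁ * s₂) = A₂ * u₂ * s₁ := by ring
          rw [this]
          exact Ideal.mul_mem_right _ _ (Ideal.mul_mem_left _ _ hu₂mem)
        have hS₁ : Ideal.Quotient.mk (sInf B₁) (s₁ * s₂)
            = Ideal.Quotient.mk (sInf B₁) (t₁ * (u₁ * s₂)) := by
          rw [Ideal.Quotient.eq]
          have : s₁ * s₂ - t₁ * (u₁ * s₂) = e₁ * s₂ := by ring
          rw [this]
          exact Ideal.mul_mem_right _ _ he₁mem
        rw [hX₁, hS₁]
        simp only [map_mul]
        rw [hA₁, ← hz₁, ← ht₁]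
        ring
      have comp₂ : z.2 * algebraMap (R ⧸ I) F₂ (Ideal.Quotient.mk I (s₁ * s₂))
          = algebraMap (R ⧸ I) F₂ (Ideal.Quotient.mk I X) := by
        rw [halg₂, halg₂]
        have hX₂ : Ideal.Quotient.mk (sInf B₂) X
            = Ideal.Quotient.mk (sInf B₂) (A₂ * (u₂ * s₁)) := by
          rw [Ideal.Quotient.eq]
          have : X - A₂ * (u₂ * s₁) = A₁ * u₁ * s₂ := by ring
          rw [this]
          exact Ideal.mul_mem_right _ _ (Ideal.mul_mem_left _ _ hu₁mem)
        have hS₂ : Ideal.Quotient.mk (sInf B₂) (s₁ * s₂)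
            = Ideal.Quotient.mk (sInf B₂) (t₂ * (u₂ * s₁)) := by
          rw [Ideal.Quotient.eq]
          have : s₁ * s₂ - t₂ * (u₂ * s₁) = e₂ * s₁ := by ring
          rw [this]
          exact Ideal.mul_mem_right _ _ he₂mem
        rw [hX₂, hS₂]
        simp only [map_mul]
        rw [hA₂, ← hz₂, ← ht₂]
        ring
      exact Prod.ext (by simpa using comp₁) (by simpa using comp₂)
    · -- exists_of_eq
      intro x y hxy
      obtain ⟨a, rfl⟩ := Ideal.Quotient.mk_surjective x
      obtain ⟨b, rfl⟩ := Ideal.Quotient.mk_surjective y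
      refine ⟨1, ?_⟩
      have h1 : algebraMap (R ⧸ I) F₁ (Ideal.Quotient.mk I a)
          = algebraMap (R ⧸ I) F₁ (Ideal.Quotient.mk I b) := congrArg Prod.fst hxy
      have h2 : algebraMap (R ⧸ I) F₂ (Ideal.Quotient.mk I a)
          = algebraMap (R ⧸ I) F₂ (Ideal.Quotient.mk I b) := congrArg Prod.snd hxy
      rw [halg₁ a, halg₁ b] at h1
      rw [halg₂ a, halg₂ b] at h2
      have m1 : a - b ∈ sInf B₁ := by
        rw [← Ideal.Quotient.eq]
        exact IsFractionRing.injective (R ⧸ sInf B₁) F₁ h1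
      have m2 : a - b ∈ sInf B₂ := by
        rw [← Ideal.Quotient.eq]
        exact IsFractionRing.injective (R ⧸ sInf B₂) F₂ h2
      have : a - b ∈ I := by
        rw [hIdef, sInf_union]
        exact Submodule.mem_inf.mpr ⟨m1, m2⟩
      simp only [OneMemClass.coe_one, one_mul]
      exact Ideal.Quotient.eq.mpr this
  -- assemble the isomorphism
  let e : FractionRing (R ⧸ I) ≃ₐ[R ⧸ I] F₁ × F₂ :=
    IsLocalization.algEquiv (nonZeroDivisors (R ⧸ I)) (FractionRing (R ⧸ I)) (F₁ × F₂)
  have hπ₁ : Function.Surjective π₁ := fun y => by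
    obtain ⟨x, rfl⟩ := Ideal.Quotient.mk_surjective y
    exact ⟨Ideal.Quotient.mk I x, Ideal.Quotient.factor_mk _ _⟩
  have hπ₂ : Function.Surjective π₂ := fun y => by
    obtain ⟨x, rfl⟩ := Ideal.Quotient.mk_surjective y
    exact ⟨Ideal.Quotient.mk I x, Ideal.Quotient.factor_mk _ _⟩
  have hiff₁ : ∀ x : F₁, IsIntegral (R ⧸ I) x ↔ IsIntegral (R ⧸ sInf B₁) x :=
    fun x => isIntegralElem_comp_iff π₁ (algebraMap (R ⧸ sInf B₁) F₁) hπ₁ x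
  have hiff₂ : ∀ x : F₂, IsIntegral (R ⧸ I) x ↔ IsIntegral (R ⧸ sInf B₂) x :=
    fun x => isIntegralElem_comp_iff π₂ (algebraMap (R ⧸ sInf B₂) F₂) hπ₂ x
  exact ⟨(icCongr e).trans (icProdEquiv.trans
    (RingEquiv.prodCongr (icBaseChange hiff₁) (icBaseChange hiff₂)))⟩
end core

set_option synthInstance.maxHeartbeats 2000000
set_option maxHeartbeats 2000000


/-- For a radical ideal `I` of a Noetherian ring `R` and `p ∈ R` with
`I₁ := I : ⟨p⟩` strictly containing `I`, setting `I₂ := I : I₁` one gets `I = I₁ ∩ I₂`,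
and the integral closure of `R/I` in its total ring of fractions splits as the product of
the integral closures of `R/I₁` and `R/I₂`. -/
theorem splitting_by_zerodivisor
    (R : Type*) [CommRing R] [IsNoetherianRing R]
    (I : Ideal R) (hrad : I.IsRadical) (p : R)
    (h : I < Submodule.colon I (Ideal.span {p})) :
    I = Submodule.colon I (Ideal.span {p}) ⊓
        Submodule.colon I (Submodule.colon I (Ideal.span {p})) ∧
    Nonempty
      ((integralClosure (R ⧸ I) (FractionRing (R ⧸ I))) ≃+*
        (integralClosure (R ⧸ (Submodule.colon I (Ideal.span {p})))
            (FractionRing (R ⧸ (Submodule.colon I (Ideal.span {p})))) ×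
          integralClosure (R ⧸ (Submodule.colon I (Submodule.colon I (Ideal.span {p}))))
            (FractionRing (R ⧸ (Submodule.colon I (Submodule.colon I (Ideal.span {p}))))))) := by
  classical
  set M : Set (Ideal R) := I.minimalPrimes with hMdef
  have hMfin : M.Finite := by
    rw [hMdef, Ideal.minimalPrimes_eq_comap]
    exact ((minimalPrimes.finite_of_isNoetherianRing (R ⧸ I)).image _)
  have hMprime : ∀ P ∈ M, P.IsPrime := fun P hP => hP.1.1
  have hMle : ∀ P ∈ M, I ≤ P := fun P hP => hP.1.2
  have hMincomp : ∀ P ∈ M, ∀ Q ∈ M, P ≤ Q → P = Q :=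
    fun P hP Q hQ hle => le_antisymm hle (hQ.2 ⟨hP.1.1, hP.1.2⟩ hle)
  have hsInfM : sInf M = I := by
    rw [hMdef, Ideal.sInf_minimalPrimes, Ideal.IsRadical.radical hrad]
  set B₁ : Set (Ideal R) := {P | P ∈ M ∧ p ∉ P} with hB₁def
  set B₂ : Set (Ideal R) := {P | P ∈ M ∧ p ∈ P} with hB₂def
  have hU : B₁ ∪ B₂ = M := by
    ext P
    simp only [hB₁def, hB₂def, Set.mem_union, Set.mem_setOf_eq]
    tauto
  have hfin₁ : B₁.Finite := hMfin.subset (fun P hP => hP.1)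
  have hfin₂ : B₂.Finite := hMfin.subset (fun P hP => hP.1)
  have hp₁ : ∀ P ∈ B₁, P.IsPrime := fun P hP => hMprime P hP.1
  have hp₂ : ∀ P ∈ B₂, P.IsPrime := fun P hP => hMprime P hP.1
  have hdisj : ∀ P ∈ B₁, P ∉ B₂ := fun P hP hP2 => hP.2 hP2.2
  -- first colon ideal
  have hc₁ : Submodule.colon I (Ideal.span {p}) = sInf B₁ := by
    apply le_antisymm
    · intro x hx
      have hxp : x * p ∈ I := by
        simpa using Submodule.mem_colon.mp hx p (Ideal.mem_span_singleton_self p)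
      rw [Submodule.mem_sInf]
      intro P hP
      exact ((hp₁ P hP).mul_mem_iff_mem_or_mem.mp (hMle P hP.1 hxp)).resolve_right hP.2
    · intro x hx
      rw [Submodule.mem_colon]
      intro y hy
      obtain ⟨a, rfl⟩ := Ideal.mem_span_singleton'.mp hy
      rw [← hsInfM, Submodule.mem_sInf]
      intro P hP
      by_cases hpP : p ∈ P
      · exact Ideal.mul_mem_left _ _ (Ideal.mul_mem_left _ _ hpP)
      · exact Ideal.mul_mem_right _ _ (Submodule.mem_sInf.mp hx P ⟨hP, hpP⟩)
  -- second colon ideal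
  have hc₂ : Submodule.colon I ((sInf B₁ : Ideal R) : Set R) = sInf B₂ := by
    apply le_antisymm
    · intro x hx
      rw [Submodule.mem_sInf]
      intro P hP
      obtain ⟨y, hy, hyP⟩ := exists_mem_sInf_not_mem B₁ hfin₁ P (hp₂ P hP)
        (fun Q hQ hle => hQ.2 ((hMincomp Q hQ.1 P hP.1 hle) ▸ hP.2))
      have hxy : x * y ∈ I := by simpa using Submodule.mem_colon.mp hx y hy
      exact ((hp₂ P hP).mul_mem_iff_mem_or_mem.mp (hMle P hP.1 hxy)).resolve_right hyP
    · intro x hx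
      rw [Submodule.mem_colon]
      intro y hy
      rw [← hsInfM, Submodule.mem_sInf]
      intro P hP
      by_cases hpP : p ∈ P
      · exact Ideal.mul_mem_right _ _ (Submodule.mem_sInf.mp hx P ⟨hP, hpP⟩)
      · exact Ideal.mul_mem_left _ _ (Submodule.mem_sInf.mp hy P ⟨hP, hpP⟩)
  have hIeq : I = sInf (B₁ ∪ B₂) := by rw [hU, hsInfM]
  constructor
  · rw [hc₁, hc₂]
    rw [← sInf_union, ← hIeq]
  · rw [hc₁, hc₂]
    have := split_core B₁ B₂ hfin₁ hfin₂
      (by rw [hU]; exact hMprime) (by rw [hU]; exact hMincomp) hdisj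
    rwa [← hIeq] at this
end
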